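/- Let v be an even, nondecreasing, submultiplicative weight on ℝ, let h > 0, and let f: ℝ → ℂ be continuous with amalgam norm ‖f‖_W = (Σ_{l∈ℤ} sup_{x∈[0,1]} |f(x+l)|² v(l)²)^{1/2} < ∞. Then Σ_{j∈ℤ} |f(hj)|² v(hj)² ≤ ⌈1/h⌉ · v(1)² · ‖f‖_W². -/

import Mathlib

/-! Every sample point `h * j` lies in the unit cell `[l, l + 1)` with `l = ⌊h * j⌋`, so
`‖f (h * j)‖ ≤ locSup f l` and, by monotonicity and submultiplicativity of `v`,
`v (h * j) ≤ v (1 + |l|) ≤ v 1 * v l`. Thus each sample term is at most `v 1 ^ 2` times the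
`l`-th term of the amalgam norm, and each `l` is hit by at most `⌈1 / h⌉` indices `j`. -/

/-- Local sup of |f| on the unit interval [l, l+1]. -/
noncomputable def locSup (f : ℝ → ℂ) (l : ℤ) : ℝ :=
  ⨆ x ∈ Set.Icc (0:ℝ) 1, ‖f (x + (l : ℝ))‖

open Finset

theorem norm_le_locSup {f : ℝ → ℂ} (hf : Continuous f) (l : ℤ) {x : ℝ}
    (hx : x ∈ Set.Icc (0 : ℝ) 1) : ‖f (x + l)‖ ≤ locSup f l := by
  set g : ℝ → ℝ := fun y => ‖f (y + l)‖
  have hbdd : BddAbove (g '' Set.Icc 0 1) :=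
    (isCompact_Icc.image (by fun_prop)).bddAbove
  rw [locSup, ← ciSup_subtype_fun (by rwa [Set.image_eq_range] at hbdd)]
  · exact le_ciSup_set hbdd hx
  · rw [Real.sSup_empty]
    exact Real.iSup_nonneg fun _ => norm_nonneg _

theorem norm_le_locSup_floor {f : ℝ → ℂ} (hf : Continuous f) (y : ℝ) :
    ‖f y‖ ≤ locSup f ⌊y⌋ := by
  simpa only [Int.fract_add_floor] using
    norm_le_locSup hf ⌊y⌋ ⟨Int.fract_nonneg y, (Int.fract_lt_one y).le⟩

theorem weight_le_mul_weight_floor {v : ℝ → ℝ}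
    (hmono : ∀ x y, |x| ≤ |y| → v x ≤ v y) (hsub : ∀ x y, v (x + y) ≤ v x * v y) (y : ℝ) :
    v y ≤ v 1 * v ⌊y⌋ := by
  have habs : v |(⌊y⌋ : ℝ)| = v ⌊y⌋ :=
    le_antisymm (hmono _ _ (abs_abs _).le) (hmono _ _ (abs_abs _).ge)
  have hy : |y| ≤ 1 + |(⌊y⌋ : ℝ)| := by
    rw [abs_le]
    constructor <;> linarith [Int.floor_le y, Int.lt_floor_add_one y, neg_abs_le (⌊y⌋ : ℝ),
      le_abs_self (⌊y⌋ : ℝ)]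
  calc v y ≤ v (1 + |(⌊y⌋ : ℝ)|) := hmono _ _ (hy.trans (le_abs_self _))
    _ ≤ v 1 * v ⌊y⌋ := habs ▸ hsub _ _

theorem Int.encard_setOf_mem_Ico_le (a t : ℝ) :
    {j : ℤ | a ≤ j ∧ (j : ℝ) < a + t}.encard ≤ ⌈t⌉.toNat := by
  calc {j : ℤ | a ≤ j ∧ (j : ℝ) < a + t}.encard
      ≤ (Ico ⌈a⌉ (⌈a⌉ + ⌈t⌉) : Set ℤ).encard := by
        refine Set.encard_le_encard fun j ⟨hlo, hhi⟩ => ?_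
        simp only [coe_Ico, Set.mem_Ico, Int.ceil_le]
        refine ⟨hlo, ?_⟩
        exact_mod_cast hhi.trans_le (add_le_add (Int.le_ceil a) (Int.le_ceil t))
    _ = ⌈t⌉.toNat := by
        rw [Set.encard_coe_eq_coe_finsetCard, Int.card_Ico, add_sub_cancel_left]

theorem encard_floor_mul_preimage_le {h : ℝ} (hh : 0 < h) (l : ℤ) :
    {j : ℤ | ⌊h * j⌋ = l}.encard ≤ ⌈1 / h⌉.toNat := by
  refine (Set.encard_le_encard fun j hj => ?_).trans (Int.encard_setOf_mem_Ico_le (l / h) (1 / h))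
  rw [Set.mem_ofPred_eq, Int.floor_eq_iff] at hj
  rw [Set.mem_ofPred_eq, ← add_div, div_le_iff₀ hh, lt_div_iff₀ hh]
  constructor <;> linarith [mul_comm h j]

section Fibers

variable {α β : Type*} {a : β → ℝ} {φ : α → β} {N : ℕ}

theorem sum_comp_le_mul_sum [DecidableEq β] (ha : ∀ b, 0 ≤ a b)
    (hφ : ∀ b, (φ ⁻¹' {b}).encard ≤ N) (s : Finset α) :
    ∑ x ∈ s, a (φ x) ≤ N * ∑ b ∈ s.image φ, a b := by
  rw [sum_comp, mul_sum]
  refine sum_le_sum fun b _ => ?_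
  have hcard : (#{x ∈ s | φ x = b} : ℕ∞) ≤ N := by
    rw [← Set.encard_coe_eq_coe_finsetCard, coe_filter]
    exact (Set.encard_le_encard fun x hx => hx.2).trans (hφ b)
  rw [nsmul_eq_mul]
  exact mul_le_mul_of_nonneg_right (by exact_mod_cast hcard) (ha b)

theorem sum_comp_le_mul_tsum (ha : ∀ b, 0 ≤ a b) (hsum : Summable a)
    (hφ : ∀ b, (φ ⁻¹' {b}).encard ≤ N) (s : Finset α) :
    ∑ x ∈ s, a (φ x) ≤ N * ∑' b, a b := by
  classical
  exact (sum_comp_le_mul_sum ha hφ s).trans <|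
    mul_le_mul_of_nonneg_left (hsum.sum_le_tsum _ fun b _ => ha b) N.cast_nonneg

theorem summable_comp_of_encard_fiber_le (ha : ∀ b, 0 ≤ a b) (hsum : Summable a)
    (hφ : ∀ b, (φ ⁻¹' {b}).encard ≤ N) : Summable fun x => a (φ x) :=
  summable_of_sum_le (fun x => ha (φ x)) (sum_comp_le_mul_tsum ha hsum hφ)

theorem tsum_comp_le_mul_tsum (ha : ∀ b, 0 ≤ a b) (hsum : Summable a)
    (hφ : ∀ b, (φ ⁻¹' {b}).encard ≤ N) : ∑' x, a (φ x) ≤ N * ∑' b, a b :=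
  Real.tsum_le_of_sum_le (fun x => ha (φ x)) (sum_comp_le_mul_tsum ha hsum hφ)

end Fibers

theorem weighted_sample_sum_bound_general (v : ℝ → ℝ) (f : ℝ → ℂ)
    (hpos : ∀ x, 0 < v x)
    (hmono : ∀ x y, |x| ≤ |y| → v x ≤ v y)
    (hsub : ∀ x y, v (x + y) ≤ v x * v y)
    (hf : Continuous f)
    (hW : Summable fun l : ℤ => locSup f l ^ 2 * v (l : ℝ) ^ 2)
    (h : ℝ) (hh : 0 < h) :
    ∑' j : ℤ, ‖f (h * (j : ℝ))‖ ^ 2 * v (h * (j : ℝ)) ^ 2 ≤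
      ((⌈1/h⌉ : ℤ) : ℝ) * v 1 ^ 2 * ∑' l : ℤ, locSup f l ^ 2 * v (l : ℝ) ^ 2 := by
  set a : ℤ → ℝ := fun l => locSup f l ^ 2 * v l ^ 2
  set φ : ℤ → ℤ := fun j => ⌊h * j⌋
  have ha : ∀ l, 0 ≤ a l := fun l => by positivity
  have hsample : ∀ j : ℤ, ‖f (h * j)‖ ^ 2 * v (h * j) ^ 2 ≤ v 1 ^ 2 * a (φ j) := fun j => by
    calc ‖f (h * j)‖ ^ 2 * v (h * j) ^ 2 ≤ locSup f (φ j) ^ 2 * (v 1 * v (φ j)) ^ 2 := by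
          gcongr
          · exact norm_le_locSup_floor hf _
          · exact (hpos _).le
          · exact weight_le_mul_weight_floor hmono hsub _
      _ = v 1 ^ 2 * a (φ j) := by ring
  have hφ : ∀ l, (φ ⁻¹' {l}).encard ≤ ⌈1 / h⌉.toNat := encard_floor_mul_preimage_le hh
  have hN : ((⌈1 / h⌉.toNat : ℕ) : ℝ) = ⌈1 / h⌉ := by
    exact_mod_cast Int.toNat_of_nonneg (Int.ceil_pos.2 (by positivity)).le
  have hdom : Summable fun j => v 1 ^ 2 * a (φ j) :=
    (summable_comp_of_encard_fiber_le ha hW hφ).mul_left _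
  calc ∑' j : ℤ, ‖f (h * j)‖ ^ 2 * v (h * j) ^ 2
      ≤ ∑' j, v 1 ^ 2 * a (φ j) :=
        (hdom.of_nonneg_of_le (fun j => by positivity) hsample).tsum_le_tsum hsample hdom
    _ ≤ ⌈1 / h⌉ * v 1 ^ 2 * ∑' l, a l := by
        rw [tsum_mul_left, ← hN, mul_comm _ (v 1 ^ 2), mul_assoc]
        exact mul_le_mul_of_nonneg_left (tsum_comp_le_mul_tsum ha hW hφ) (by positivity)

/-- For an even, nondecreasing, submultiplicative weight v, h > 0 and a
continuous f with finite amalgam norm ‖f‖_W, the weighted samples satisfy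
Σ_{j∈ℤ} |f(hj)|² v(hj)² ≤ ⌈1/h⌉ · v(1)² · ‖f‖_W². -/
theorem weighted_sample_sum_bound (v : ℝ → ℝ) (f : ℝ → ℂ)
    (hpos : ∀ x, 0 < v x)
    (heven : ∀ x, v (-x) = v x)
    (hmono : ∀ x y, |x| ≤ |y| → v x ≤ v y)
    (hsub : ∀ x y, v (x + y) ≤ v x * v y)
    (hf : Continuous f)
    (hW : Summable fun l : ℤ => locSup f l ^ 2 * v (l : ℝ) ^ 2)
    (h : ℝ) (hh : 0 < h) :
    ∑' j : ℤ, ‖f (h * (j : ℝ))‖ ^ 2 * v (h * (j : ℝ)) ^ 2 ≤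
      ((⌈1/h⌉ : ℤ) : ℝ) * v 1 ^ 2 * ∑' l : ℤ, locSup f l ^ 2 * v (l : ℝ) ^ 2 :=
  weighted_sample_sum_bound_general v f hpos hmono hsub hf hW h hh
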